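/- Let n ∈ ℕ and let g : ℝⁿ → ℂ be measurable and of moderate growth, i.e., x ↦ (1+|x|)^{−N}·g(x) is in L¹(ℝⁿ) for some N ∈ ℕ. Let I = {(i,j) ∈ {1,…,n}² : i ≤ j}, let Ω : ℝ^I → Sym_n be the parametrization Ω(A) = Σ_{i≤j} A_{i,j} E_{i,j} + Σ_{i>j} A_{j,i} E_{i,j}, and let U = Ω⁻¹(Sym_n⁺). Then the map U → ℂ, A ↦ ∫_{ℝⁿ} g(x)·φ_{Ω(A)}(x) dx = 𝔼[g(X_{Ω(A)})] is smooth (infinitely differentiable) on U. -/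

import Mathlib

open MeasureTheory
open scoped Real

/-- The index set `I = {(i,j) : 1 ≤ i ≤ j ≤ n}`. -/
abbrev SymIdx (n : ℕ) := {p : Fin n × Fin n // p.1 ≤ p.2}

/-- The parametrization `Ω : ℝ^I → Sym_n`. -/
def OmegaParam {n : ℕ} (A : SymIdx n → ℝ) : Matrix (Fin n) (Fin n) ℝ :=
  fun i j => if h : i ≤ j then A ⟨(i, j), h⟩ else A ⟨(j, i), (le_total i j).resolve_left h⟩

namespace GaussSmoothAux

open scoped Nat

variable {n : ℕ}

noncomputable local instance : NormedRing (Matrix (Fin n) (Fin n) ℝ) :=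
  Matrix.linftyOpNormedRing
noncomputable local instance : NormedAlgebra ℝ (Matrix (Fin n) (Fin n) ℝ) :=
  Matrix.linftyOpNormedAlgebra
local instance : CompleteSpace (Matrix (Fin n) (Fin n) ℝ) :=
  FiniteDimensional.complete ℝ _

/-- The quadratic form `x ↦ xᵀ B x`. -/
def qf (B : Matrix (Fin n) (Fin n) ℝ) (x : Fin n → ℝ) : ℝ :=
  ∑ i, x i * B.mulVec x i

lemma qf_add (B C : Matrix (Fin n) (Fin n) ℝ) (x : Fin n → ℝ) :
    qf (B + C) x = qf B x + qf C x := by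
  simp [qf, Matrix.add_mulVec, mul_add, Finset.sum_add_distrib]

lemma qf_smul (t : ℝ) (B : Matrix (Fin n) (Fin n) ℝ) (x : Fin n → ℝ) :
    qf (t • B) x = t * qf B x := by
  simp only [qf, Matrix.smul_mulVec, Pi.smul_apply, smul_eq_mul, Finset.mul_sum]
  congr 1; ext i; ring

lemma qf_smul_vec (B : Matrix (Fin n) (Fin n) ℝ) (t : ℝ) (x : Fin n → ℝ) :
    qf B (t • x) = t ^ 2 * qf B x := by
  simp only [qf, Matrix.mulVec_smul, Pi.smul_apply, smul_eq_mul, Finset.mul_sum]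
  congr 1; ext i; ring

lemma qf_zero_vec (B : Matrix (Fin n) (Fin n) ℝ) : qf B 0 = 0 := by
  simp [qf]

lemma abs_qf_le (B : Matrix (Fin n) (Fin n) ℝ) (x : Fin n → ℝ) :
    |qf B x| ≤ n * (‖B‖ * ‖x‖ ^ 2) := by
  have h1 : ∀ i, |x i * B.mulVec x i| ≤ ‖x‖ * (‖B‖ * ‖x‖) := by
    intro i
    rw [abs_mul]
    have hx : |x i| ≤ ‖x‖ := by
      simpa [Real.norm_eq_abs] using norm_le_pi_norm x i
    have hv : |B.mulVec x i| ≤ ‖B‖ * ‖x‖ := by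
      have h2 : ‖B.mulVec x i‖ ≤ ‖B.mulVec x‖ := norm_le_pi_norm _ i
      have h3 : ‖B.mulVec x‖ ≤ ‖B‖ * ‖x‖ := Matrix.linfty_opNorm_mulVec B x
      simpa [Real.norm_eq_abs] using h2.trans h3
    exact mul_le_mul hx hv (abs_nonneg _) (norm_nonneg _)
  calc |qf B x| ≤ ∑ i, |x i * B.mulVec x i| := Finset.abs_sum_le_sum_abs _ _
    _ ≤ ∑ _i : Fin n, ‖x‖ * (‖B‖ * ‖x‖) := Finset.sum_le_sum fun i _ => h1 i
    _ = n * (‖B‖ * ‖x‖ ^ 2) := by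
      rw [Finset.sum_const, Finset.card_univ, Fintype.card_fin, nsmul_eq_mul]; ring

lemma continuous_qf (B : Matrix (Fin n) (Fin n) ℝ) : Continuous fun x => qf B x := by
  unfold qf Matrix.mulVec dotProduct
  exact continuous_finset_sum _ fun i _ => (continuous_apply i).mul
    (continuous_finset_sum _ fun j _ => continuous_const.mul (continuous_apply j))

lemma posdef_qf {B : Matrix (Fin n) (Fin n) ℝ} (hB : B.PosDef) {x : Fin n → ℝ} (hx : x ≠ 0) :
    0 < qf B x := by
  simpa [qf, dotProduct] using hB.dotProduct_mulVec_pos hx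

/-- Quantitative coercivity for positive definite matrices. -/
lemma exists_coercive {B : Matrix (Fin n) (Fin n) ℝ} (hB : B.PosDef) :
    ∃ c > 0, ∀ x, c * ‖x‖ ^ 2 ≤ qf B x := by
  rcases Nat.eq_zero_or_pos n with hn | hn
  · subst hn
    refine ⟨1, one_pos, fun x => ?_⟩
    have hx : x = 0 := Subsingleton.elim x 0
    rw [hx, qf_zero_vec, norm_zero]
    norm_num
  · haveI : Nonempty (Fin n) := Fin.pos_iff_nonempty.mp hn
    have hsph : (Metric.sphere (0 : Fin n → ℝ) 1).Nonempty := by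
      refine ⟨fun _ => 1, ?_⟩
      simp [Metric.mem_sphere, dist_zero_right]
    obtain ⟨x₀, hx₀, hmin⟩ := IsCompact.exists_isMinOn (isCompact_sphere (0 : Fin n → ℝ) 1) hsph
      (continuous_qf B).continuousOn
    have hx₀n : ‖x₀‖ = 1 := by simpa [Metric.mem_sphere, dist_zero_right] using hx₀
    have hx₀0 : x₀ ≠ 0 := by
      intro h; rw [h] at hx₀n; simp at hx₀n
    refine ⟨qf B x₀, posdef_qf hB hx₀0, fun x => ?_⟩
    rcases eq_or_ne x 0 with rfl | hx
    · simp [qf_zero_vec]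
    · have hxn : 0 < ‖x‖ := norm_pos_iff.mpr hx
      have hu : (‖x‖⁻¹ • x) ∈ Metric.sphere (0 : Fin n → ℝ) 1 := by
        simp [Metric.mem_sphere, dist_zero_right, norm_smul, abs_of_pos (inv_pos.mpr hxn),
          inv_mul_cancel₀ hxn.ne']
      have : qf B x₀ ≤ qf B (‖x‖⁻¹ • x) := hmin hu
      rw [qf_smul_vec] at this
      have h2 : qf B x₀ * ‖x‖ ^ 2 ≤ qf B x := by
        have h3 := mul_le_mul_of_nonneg_right this (sq_nonneg ‖x‖)
        have heq : (‖x‖⁻¹ ^ 2 * qf B x) * ‖x‖ ^ 2 = qf B x := by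
          field_simp
        rw [heq] at h3
        exact h3
      linarith

lemma coercive_of_close {B₀ B : Matrix (Fin n) (Fin n) ℝ} {c : ℝ}
    (h : ∀ x, c * ‖x‖ ^ 2 ≤ qf B₀ x) (hd : ‖B - B₀‖ ≤ c / (2 * (n + 1))) :
    ∀ x, c / 2 * ‖x‖ ^ 2 ≤ qf B x := by
  intro x
  have h1 : qf B x = qf B₀ x + qf (B - B₀) x := by
    rw [← qf_add]; congr 1; abel
  have h2 := abs_qf_le (B - B₀) x
  have h3 : (n : ℝ) * (‖B - B₀‖ * ‖x‖ ^ 2) ≤ (c / 2) * ‖x‖ ^ 2 := by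
    have hn1 : (n : ℝ) ≤ n + 1 := by linarith
    have hBnn : (0:ℝ) ≤ ‖B - B₀‖ := norm_nonneg _
    have hc : 0 ≤ c / (2 * (n+1)) := le_trans hBnn hd
    have : (n:ℝ) * ‖B - B₀‖ ≤ c / 2 := by
      calc (n:ℝ) * ‖B - B₀‖ ≤ (n+1) * (c / (2 * (n+1))) := by
            apply mul_le_mul hn1 hd hBnn (by positivity)
        _ = c / 2 := by field_simp
      
    calc (n : ℝ) * (‖B - B₀‖ * ‖x‖ ^ 2) = ((n:ℝ) * ‖B - B₀‖) * ‖x‖ ^ 2 := by ring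
      _ ≤ (c/2) * ‖x‖ ^ 2 := mul_le_mul_of_nonneg_right this (sq_nonneg _)
  have h4 : -(c/2 * ‖x‖^2) ≤ qf (B - B₀) x := by
    have := (abs_le.mp h2).1
    linarith
  have h5 := h x
  linarith

lemma poly_exp_bound (ε : ℝ) (hε : 0 < ε) (M : ℕ) (t : ℝ) (ht : 0 ≤ t) :
    (1 + t) ^ M * Real.exp (-(ε * t ^ 2)) ≤ Real.exp ((M : ℝ) ^ 2 / (4 * ε)) := by
  have h1 : (1 + t) ^ M ≤ Real.exp ((M : ℝ) * t) := by
    calc (1 + t) ^ M ≤ (Real.exp t) ^ M := by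
          apply pow_le_pow_left₀ (by linarith) (by linarith [Real.add_one_le_exp t])
      _ = Real.exp ((M : ℝ) * t) := by rw [← Real.exp_nat_mul]
  calc (1 + t) ^ M * Real.exp (-(ε * t ^ 2))
      ≤ Real.exp ((M:ℝ) * t) * Real.exp (-(ε * t ^ 2)) := by
        apply mul_le_mul_of_nonneg_right h1 (Real.exp_nonneg _)
    _ = Real.exp ((M:ℝ) * t - ε * t ^ 2) := by rw [← Real.exp_add]; ring_nf
    _ ≤ Real.exp ((M : ℝ) ^ 2 / (4 * ε)) := by
        apply Real.exp_le_exp.mpr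
        rw [le_div_iff₀ (by positivity : (0:ℝ) < 4 * ε)]
        nlinarith [sq_nonneg ((M : ℝ) - 2 * ε * t)]


section WithG

variable (g : (Fin n → ℝ) → ℂ) (hg : Measurable g) (N : ℕ)
variable (hN : Integrable (fun x : Fin n → ℝ => ((1 + ‖x‖) ^ N)⁻¹ • g x))

lemma norm_g_eq (x : Fin n → ℝ) :
    ‖g x‖ = (1 + ‖x‖) ^ N * ‖((1 + ‖x‖) ^ N)⁻¹ • g x‖ := by
  have h : (0:ℝ) < (1 + ‖x‖) ^ N := by positivity
  rw [norm_smul, Real.norm_eq_abs, abs_inv, abs_of_pos h]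
  field_simp

include hg hN in
lemma integrable_dom {c : ℝ} (hc : 0 < c) (M : ℕ) :
    Integrable (fun x : Fin n → ℝ => ‖g x‖ * ((1 + ‖x‖) ^ M * Real.exp (-(c * ‖x‖ ^ 2)))) := by
  set K : ℝ := Real.exp (((N + M : ℕ) : ℝ) ^ 2 / (4 * c)) with hK
  apply Integrable.mono' ((hN.norm).const_mul K)
  · apply AEStronglyMeasurable.mul hg.norm.aestronglyMeasurable
    apply Continuous.aestronglyMeasurable
    exact ((continuous_const.add continuous_norm).pow M).mul
      ((continuous_const.mul (continuous_norm.pow 2)).neg.rexp)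
  · refine Filter.Eventually.of_forall fun x => ?_
    have hnn : (0:ℝ) ≤ ‖g x‖ * ((1 + ‖x‖) ^ M * Real.exp (-(c * ‖x‖ ^ 2))) := by positivity
    rw [Real.norm_eq_abs, abs_of_nonneg hnn, norm_g_eq g N x]
    have hb := poly_exp_bound c hc (N + M) ‖x‖ (norm_nonneg x)
    rw [pow_add] at hb
    calc (1 + ‖x‖) ^ N * ‖((1 + ‖x‖) ^ N)⁻¹ • g x‖ * ((1 + ‖x‖) ^ M * Real.exp (-(c * ‖x‖ ^ 2)))
        = ‖((1 + ‖x‖) ^ N)⁻¹ • g x‖ * ((1 + ‖x‖) ^ N * (1 + ‖x‖) ^ M * Real.exp (-(c * ‖x‖ ^ 2))) := by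
          ring
      _ ≤ ‖((1 + ‖x‖) ^ N)⁻¹ • g x‖ * K := by
          apply mul_le_mul_of_nonneg_left _ (norm_nonneg _)
          simpa [hK] using hb
      _ = K * ‖((1 + ‖x‖) ^ N)⁻¹ • g x‖ := by ring


lemma real_exp_eq_tsum (t : ℝ) : Real.exp t = ∑' k : ℕ, t ^ k / k ! := by
  rw [Real.exp_eq_exp_ℝ, NormedSpace.exp_eq_tsum_div]

/-- the dominating weight -/
noncomputable def dm (c' : ℝ) (M : ℕ) (x : Fin n → ℝ) : ℝ :=
  ‖g x‖ * ((1 + ‖x‖) ^ M * Real.exp (-(c' * ‖x‖ ^ 2)))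

/-- the integrand of the `k`-th coefficient of the power series -/
noncomputable def fI (B₀ : Matrix (Fin n) (Fin n) ℝ) (k : ℕ)
    (Ms : Fin k → Matrix (Fin n) (Fin n) ℝ) (x : Fin n → ℝ) : ℂ :=
  g x * (((k ! : ℝ)⁻¹ *
    (Real.exp (-(1/2) * qf B₀ x) * ∏ i, (-(1/2) * qf (Ms i) x)) : ℝ) : ℂ)

variable {B₀ : Matrix (Fin n) (Fin n) ℝ} {c : ℝ}

lemma vb (M : Matrix (Fin n) (Fin n) ℝ) (x : Fin n → ℝ) :
    |(-(1/2) * qf M x)| ≤ ((n : ℝ)/2 * ‖M‖) * (1 + ‖x‖) ^ 2 := by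
  have h1 := abs_qf_le M x
  have h2 : ‖x‖ ^ 2 ≤ (1 + ‖x‖) ^ 2 := by nlinarith [norm_nonneg x]
  rw [abs_mul]
  have h3 : |(-(1/2) : ℝ)| = 1/2 := by norm_num
  rw [h3]
  have h4 : (n:ℝ) * (‖M‖ * ‖x‖ ^ 2) ≤ (n:ℝ) * (‖M‖ * (1 + ‖x‖) ^ 2) := by
    have := mul_le_mul_of_nonneg_left h2 (by positivity : (0:ℝ) ≤ (n:ℝ) * ‖M‖)
    nlinarith
  linarith

lemma e₀le (hc : 0 < c) (hco : ∀ x, c * ‖x‖ ^ 2 ≤ qf B₀ x) (x : Fin n → ℝ) :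
    Real.exp (-(1/2) * qf B₀ x) ≤ Real.exp (-(c/2 * ‖x‖ ^ 2)) := by
  apply Real.exp_le_exp.mpr
  have := hco x
  nlinarith

include hg in
lemma fI_bound (hc : 0 < c) (hco : ∀ x, c * ‖x‖ ^ 2 ≤ qf B₀ x) (k : ℕ)
    (Ms : Fin k → Matrix (Fin n) (Fin n) ℝ) (x : Fin n → ℝ) :
    ‖fI g B₀ k Ms x‖ ≤
      ((k ! : ℝ)⁻¹ * ∏ i, ((n : ℝ)/2 * ‖Ms i‖)) * dm g (c/2) (2*k) x := by
  have hprod : |∏ i, (-(1/2) * qf (Ms i) x)| ≤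
      (∏ i, ((n : ℝ)/2 * ‖Ms i‖)) * (1 + ‖x‖) ^ (2*k) := by
    rw [Finset.abs_prod]
    calc ∏ i, |(-(1/2) * qf (Ms i) x)|
        ≤ ∏ i, (((n : ℝ)/2 * ‖Ms i‖) * (1 + ‖x‖) ^ 2) :=
          Finset.prod_le_prod (fun i _ => abs_nonneg _) (fun i _ => vb _ _)
      _ = (∏ i, ((n : ℝ)/2 * ‖Ms i‖)) * ((1 + ‖x‖) ^ 2) ^ k := by
          rw [Finset.prod_mul_distrib, Finset.prod_const, Finset.card_univ, Fintype.card_fin]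
      _ = (∏ i, ((n : ℝ)/2 * ‖Ms i‖)) * (1 + ‖x‖) ^ (2*k) := by
          rw [← pow_mul, mul_comm 2 k]
  have hPnn : (0:ℝ) ≤ ∏ i, ((n : ℝ)/2 * ‖Ms i‖) :=
    Finset.prod_nonneg fun i _ => by positivity
  have hfac : (0:ℝ) ≤ (k ! : ℝ)⁻¹ := by positivity
  have he₀ := e₀le hc hco x
  have he₀nn : (0:ℝ) ≤ Real.exp (-(1/2) * qf B₀ x) := (Real.exp_pos _).le
  rw [fI, norm_mul, Complex.norm_real, Real.norm_eq_abs, abs_mul, abs_mul,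
    abs_of_nonneg hfac, abs_of_nonneg he₀nn]
  rw [dm]
  calc ‖g x‖ * ((k ! : ℝ)⁻¹ * (Real.exp (-(1/2) * qf B₀ x) * |∏ i, (-(1/2) * qf (Ms i) x)|))
      ≤ ‖g x‖ * ((k ! : ℝ)⁻¹ * (Real.exp (-(c/2 * ‖x‖ ^ 2)) *
          ((∏ i, ((n : ℝ)/2 * ‖Ms i‖)) * (1 + ‖x‖) ^ (2*k)))) := by
        apply mul_le_mul_of_nonneg_left _ (norm_nonneg _)
        apply mul_le_mul_of_nonneg_left _ hfac
        calc Real.exp (-(1/2) * qf B₀ x) * |∏ i, (-(1/2) * qf (Ms i) x)|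
            ≤ Real.exp (-(1/2) * qf B₀ x) *
                ((∏ i, ((n : ℝ)/2 * ‖Ms i‖)) * (1 + ‖x‖) ^ (2*k)) :=
              mul_le_mul_of_nonneg_left hprod he₀nn
          _ ≤ Real.exp (-(c/2 * ‖x‖ ^ 2)) *
                ((∏ i, ((n : ℝ)/2 * ‖Ms i‖)) * (1 + ‖x‖) ^ (2*k)) := by
              apply mul_le_mul_of_nonneg_right he₀ (by positivity)
    _ = ((k ! : ℝ)⁻¹ * ∏ i, ((n : ℝ)/2 * ‖Ms i‖)) *
          (‖g x‖ * ((1 + ‖x‖) ^ (2*k) * Real.exp (-(c/2 * ‖x‖ ^ 2)))) := by ring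

include hg hN in
lemma fI_integrable (hc : 0 < c) (hco : ∀ x, c * ‖x‖ ^ 2 ≤ qf B₀ x) (k : ℕ)
    (Ms : Fin k → Matrix (Fin n) (Fin n) ℝ) :
    Integrable (fI g B₀ k Ms) := by
  have hint := (integrable_dom g hg N hN (by positivity : (0:ℝ) < c/2) (2*k)).const_mul
    ((k ! : ℝ)⁻¹ * ∏ i, ((n : ℝ)/2 * ‖Ms i‖))
  apply Integrable.mono' hint
  · apply AEStronglyMeasurable.mul hg.aestronglyMeasurable
    apply Continuous.aestronglyMeasurable
    apply Complex.continuous_ofReal.comp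
    apply Continuous.mul continuous_const
    apply Continuous.mul
    · exact Real.continuous_exp.comp (continuous_const.mul (continuous_qf B₀))
    · exact continuous_finset_prod _ fun i _ =>
        continuous_const.mul (continuous_qf (Ms i))
  · exact Filter.Eventually.of_forall fun x => fI_bound g hg hc hco k Ms x


include hg hN in
lemma fI_intnorm_le (hc : 0 < c) (hco : ∀ x, c * ‖x‖ ^ 2 ≤ qf B₀ x) (k : ℕ)
    (Ms : Fin k → Matrix (Fin n) (Fin n) ℝ) :
    ∫ x, ‖fI g B₀ k Ms x‖ ≤
      ((k ! : ℝ)⁻¹ * ∏ i, ((n : ℝ)/2 * ‖Ms i‖)) * ∫ x, dm g (c/2) (2*k) x := by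
  rw [← MeasureTheory.integral_const_mul]
  apply integral_mono ((fI_integrable g hg N hN hc hco k Ms).norm)
    ((integrable_dom g hg N hN (by positivity : (0:ℝ) < c/2) (2*k)).const_mul _)
  exact fun x => fI_bound g hg hc hco k Ms x

/-- The `k`-th coefficient as a multilinear map. -/
noncomputable def Pml (hg : Measurable g) (N : ℕ)
    (hN : Integrable (fun x : Fin n → ℝ => ((1 + ‖x‖) ^ N)⁻¹ • g x)) (hc : 0 < c) (hco : ∀ x, c * ‖x‖ ^ 2 ≤ qf B₀ x) (k : ℕ) :
    MultilinearMap ℝ (fun _ : Fin k => Matrix (Fin n) (Fin n) ℝ) ℂ where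
  toFun Ms := ∫ x, fI g B₀ k Ms x
  map_update_add' := by
    intro dec Ms i a b
    have key : ∀ x, fI g B₀ k (Function.update Ms i (a + b)) x =
        fI g B₀ k (Function.update Ms i a) x + fI g B₀ k (Function.update Ms i b) x := by
      intro x
      have hup : ∀ (M : Matrix (Fin n) (Fin n) ℝ),
          (fun j => -(1/2) * qf ((Function.update Ms i M) j) x) =
          Function.update (fun j => -(1/2) * qf (Ms j) x) i (-(1/2) * qf M x) := by
        intro M
        funext j
        exact Function.apply_update (fun _ M => -(1/2) * qf M x) Ms i M j
      have hsplit : ∀ (M : Matrix (Fin n) (Fin n) ℝ),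
          (∏ j, (-(1/2) * qf ((Function.update Ms i M) j) x)) =
          (-(1/2) * qf M x) * ∏ j ∈ Finset.univ.erase i, (-(1/2) * qf (Ms j) x) := by
        intro M
        rw [hup M]
        rw [← Finset.prod_erase_mul _ _ (Finset.mem_univ i)]
        rw [Function.update_self]
        rw [mul_comm]
        congr 1
        apply Finset.prod_congr rfl
        intro j hj
        rw [Function.update_of_ne (Finset.ne_of_mem_erase hj)]
      have hadd : -(1/2) * qf (a + b) x = -(1/2) * qf a x + -(1/2) * qf b x := by
        rw [qf_add]; ring
      rw [fI, fI, fI, hsplit, hsplit, hsplit, hadd]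
      push_cast
      ring
    rw [show (∫ x, fI g B₀ k (Function.update Ms i (a+b)) x) =
        ∫ x, (fI g B₀ k (Function.update Ms i a) x + fI g B₀ k (Function.update Ms i b) x) from
      integral_congr_ae (Filter.Eventually.of_forall key)]
    exact integral_add (fI_integrable g hg N hN hc hco k _) (fI_integrable g hg N hN hc hco k _)
  map_update_smul' := by
    intro dec Ms i t a
    have key : ∀ x, fI g B₀ k (Function.update Ms i (t • a)) x =
        t • fI g B₀ k (Function.update Ms i a) x := by
      intro x
      have hup : ∀ (M : Matrix (Fin n) (Fin n) ℝ),
          (fun j => -(1/2) * qf ((Function.update Ms i M) j) x) =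
          Function.update (fun j => -(1/2) * qf (Ms j) x) i (-(1/2) * qf M x) := by
        intro M
        funext j
        exact Function.apply_update (fun _ M => -(1/2) * qf M x) Ms i M j
      have hsplit : ∀ (M : Matrix (Fin n) (Fin n) ℝ),
          (∏ j, (-(1/2) * qf ((Function.update Ms i M) j) x)) =
          (-(1/2) * qf M x) * ∏ j ∈ Finset.univ.erase i, (-(1/2) * qf (Ms j) x) := by
        intro M
        rw [hup M]
        rw [← Finset.prod_erase_mul _ _ (Finset.mem_univ i)]
        rw [Function.update_self]
        rw [mul_comm]
        congr 1
        apply Finset.prod_congr rfl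
        intro j hj
        rw [Function.update_of_ne (Finset.ne_of_mem_erase hj)]
      have hsm : -(1/2) * qf (t • a) x = t * (-(1/2) * qf a x) := by
        rw [qf_smul]; ring
      rw [fI, fI, hsplit, hsplit, hsm]
      rw [Complex.real_smul]
      push_cast
      ring
    rw [show (∫ x, fI g B₀ k (Function.update Ms i (t • a)) x) =
        ∫ x, t • fI g B₀ k (Function.update Ms i a) x from
      integral_congr_ae (Filter.Eventually.of_forall key)]
    exact integral_smul t _

include hg hN in
lemma Pml_bound (hc : 0 < c) (hco : ∀ x, c * ‖x‖ ^ 2 ≤ qf B₀ x) (k : ℕ)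
    (Ms : Fin k → Matrix (Fin n) (Fin n) ℝ) :
    ‖Pml g hg N hN hc hco k Ms‖ ≤
      ((k ! : ℝ)⁻¹ * ((n : ℝ)/2) ^ k * ∫ x, dm g (c/2) (2*k) x) * ∏ i, ‖Ms i‖ := by
  have h1 : ‖Pml g hg N hN hc hco k Ms‖ ≤
      ((k ! : ℝ)⁻¹ * ∏ i, ((n : ℝ)/2 * ‖Ms i‖)) * ∫ x, dm g (c/2) (2*k) x :=
    (norm_integral_le_integral_norm _).trans (fI_intnorm_le g hg N hN hc hco k Ms)
  have h2 : ((k ! : ℝ)⁻¹ * ∏ i, ((n : ℝ)/2 * ‖Ms i‖)) * (∫ x, dm g (c/2) (2*k) x) =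
      ((k ! : ℝ)⁻¹ * ((n : ℝ)/2) ^ k * ∫ x, dm g (c/2) (2*k) x) * ∏ i, ‖Ms i‖ := by
    rw [Finset.prod_mul_distrib, Finset.prod_const, Finset.card_univ, Fintype.card_fin]
    ring
  rw [h2] at h1
  exact h1


lemma dm_nonneg (c' : ℝ) (M : ℕ) (x : Fin n → ℝ) : 0 ≤ dm g c' M x := by
  rw [dm]; positivity

include hg hN in
lemma core_bound (hc : 0 < c) (k : ℕ) :
    ((k ! : ℝ)⁻¹ * ((n : ℝ)/2) ^ k * ∫ x, dm g (c/2) (2*k) x) * (c/(4*((n:ℝ)+1))) ^ k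
      ≤ Real.exp (c/4) * ∫ x, dm g (c/4) 0 x := by
  set r₀ := c/(4*((n:ℝ)+1)) with hr₀def
  have hr₀ : 0 < r₀ := by positivity
  have hnr : (n:ℝ) * r₀ ≤ c/4 := by
    rw [hr₀def]
    have h : (n:ℝ) * (c / (4*((n:ℝ)+1))) = c * n / (4*((n:ℝ)+1)) := by ring
    rw [h, div_le_div_iff₀ (by positivity) (by norm_num)]
    nlinarith [hc.le, Nat.cast_nonneg (α := ℝ) n]
  have h1 : ((k ! : ℝ)⁻¹ * ((n : ℝ)/2) ^ k * ∫ x, dm g (c/2) (2*k) x) * r₀ ^ k =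
      ∫ x, ((k ! : ℝ)⁻¹ * ((n : ℝ)/2) ^ k * r₀ ^ k) * dm g (c/2) (2*k) x := by
    rw [MeasureTheory.integral_const_mul]; ring
  rw [h1, ← MeasureTheory.integral_const_mul]
  apply integral_mono_of_nonneg
  · exact Filter.Eventually.of_forall fun x => by
      have := dm_nonneg g (c/2) (2*k) x
      positivity
  · exact (integrable_dom g hg N hN (by positivity : (0:ℝ) < c/4) 0).const_mul _
  · refine Filter.Eventually.of_forall fun x => ?_
    set s := ‖x‖ with hs
    have hsnn : 0 ≤ s := norm_nonneg x
    set t := ((n:ℝ) * r₀ / 2) * (1 + s) ^ 2 with ht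
    have htnn : 0 ≤ t := by positivity
    simp only [dm, ← hs]
    have h2 : (k ! : ℝ)⁻¹ * ((n : ℝ)/2) ^ k * r₀ ^ k * (1 + s) ^ (2*k) = t ^ k / k ! := by
      rw [ht, pow_mul]
      rw [div_eq_mul_inv]
      rw [mul_pow, mul_pow]
      ring_nf
    have h3 : t ^ k / (k ! : ℝ) ≤ Real.exp t := Real.pow_div_factorial_le_exp (x := t) htnn k
    have h4 : t + -(c/2 * s ^ 2) ≤ c/4 + -(c/4 * s ^ 2) := by
      have h5 : t ≤ (c/8) * (1 + s) ^ 2 := by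
        rw [ht]
        apply mul_le_mul_of_nonneg_right _ (by positivity)
        linarith
      nlinarith [sq_nonneg (1 - s)]
    calc (k ! : ℝ)⁻¹ * ((n:ℝ)/2) ^ k * r₀ ^ k * (‖g x‖ * ((1 + s) ^ (2*k) * Real.exp (-(c/2 * s ^ 2))))
        = ‖g x‖ * ((t ^ k / k !) * Real.exp (-(c/2 * s ^ 2))) := by rw [← h2]; ring
      _ ≤ ‖g x‖ * (Real.exp t * Real.exp (-(c/2 * s ^ 2))) := by
          apply mul_le_mul_of_nonneg_left _ (norm_nonneg _)
          exact mul_le_mul_of_nonneg_right h3 (Real.exp_nonneg _)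
      _ = ‖g x‖ * Real.exp (t + -(c/2 * s ^ 2)) := by rw [Real.exp_add]
      _ ≤ ‖g x‖ * Real.exp (c/4 + -(c/4 * s ^ 2)) := by
          apply mul_le_mul_of_nonneg_left _ (norm_nonneg _)
          exact Real.exp_le_exp.mpr h4
      _ = Real.exp (c/4) * (‖g x‖ * ((1 + s) ^ 0 * Real.exp (-(c/4 * s ^ 2)))) := by
          rw [Real.exp_add]; ring

include hg hN in
theorem analyticAt_H (hc : 0 < c) (hco : ∀ x, c * ‖x‖ ^ 2 ≤ qf B₀ x) :
    AnalyticAt ℝ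
      (fun B : Matrix (Fin n) (Fin n) ℝ =>
        ∫ x : Fin n → ℝ, g x * ((Real.exp (-(1/2) * qf B x) : ℝ) : ℂ)) B₀ := by
  classical
  set r₀ := c/(4*((n:ℝ)+1)) with hr₀def
  have hr₀ : 0 < r₀ := by positivity
  set C := Real.exp (c/4) * ∫ x, dm g (c/4) 0 x with hC
  set bk : ℕ → ℝ := fun k => (k ! : ℝ)⁻¹ * ((n : ℝ)/2) ^ k * ∫ x, dm g (c/2) (2*k) x with hbk
  have hbknn : ∀ k, 0 ≤ bk k := by
    intro k
    have h0 : 0 ≤ ∫ x, dm g (c/2) (2*k) x := integral_nonneg fun x => dm_nonneg g _ _ x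
    rw [hbk]
    positivity
  set p : FormalMultilinearSeries ℝ (Matrix (Fin n) (Fin n) ℝ) ℂ :=
    fun k => MultilinearMap.mkContinuous (Pml g hg N hN hc hco k) (bk k)
      (Pml_bound g hg N hN hc hco k) with hp
  have hpk : ∀ k, (p k).opNorm ≤ bk k := fun k =>
    MultilinearMap.mkContinuous_norm_le _ (hbknn k) _
  set rnn : NNReal := ⟨r₀, hr₀.le⟩ with hrnn
  have hrad : (rnn : ENNReal) ≤ p.radius := by
    apply p.le_radius_of_bound C
    intro k
    have h1 : (p k).opNorm * (rnn : ℝ) ^ k ≤ bk k * r₀ ^ k := by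
      apply mul_le_mul_of_nonneg_right (hpk k) (by positivity)
    exact h1.trans (core_bound g hg N hN hc k)
  have hfp : HasFPowerSeriesOnBall
      (fun B : Matrix (Fin n) (Fin n) ℝ =>
        ∫ x : Fin n → ℝ, g x * ((Real.exp (-(1/2) * qf B x) : ℝ) : ℂ)) p B₀ rnn := by
    refine ⟨hrad, by exact_mod_cast hr₀, ?_⟩
    intro y hy
    have hy' : ‖y‖ < r₀ := by
      rw [EMetric.mem_ball, edist_zero_right, enorm_eq_nnnorm, ENNReal.coe_lt_coe] at hy
      exact_mod_cast hy
    have hynn : 0 ≤ ‖y‖ := norm_nonneg y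
    have hint : ∀ k : ℕ, Integrable (fI g B₀ k (fun _ : Fin k => y)) := fun k =>
      fI_integrable g hg N hN hc hco k _
    have hsummable : Summable (fun k => ∫ x, ‖fI g B₀ k (fun _ : Fin k => y) x‖) := by
      have hgeo : Summable (fun k : ℕ => (‖y‖/r₀) ^ k * C) := by
        apply Summable.mul_right
        exact summable_geometric_of_lt_one (by positivity) ((div_lt_one hr₀).mpr hy')
      apply Summable.of_nonneg_of_le
        (fun k => integral_nonneg fun x => norm_nonneg _) _ hgeo
      intro k
      have h1 := fI_intnorm_le g hg N hN hc hco k (fun _ : Fin k => y)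
      have h2 : ((k ! : ℝ)⁻¹ * ∏ _i : Fin k, ((n : ℝ)/2 * ‖y‖)) *
          ∫ x, dm g (c/2) (2*k) x = (‖y‖/r₀) ^ k * (bk k * r₀ ^ k) := by
        rw [Finset.prod_const, Finset.card_univ, Fintype.card_fin, hbk]
        have hyy : (n : ℝ)/2 * ‖y‖ = (‖y‖/r₀) * ((n:ℝ)/2 * r₀) := by
          field_simp
        rw [hyy, mul_pow, mul_pow]
        ring
      rw [h2] at h1
      exact h1.trans (mul_le_mul_of_nonneg_left (core_bound g hg N hN hc k) (by positivity))
    have hkey := hasSum_integral_of_summable_integral_norm hint hsummable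
    have hptw : ∀ x, (∑' k, fI g B₀ k (fun _ : Fin k => y) x) =
        g x * ((Real.exp (-(1/2) * qf (B₀ + y) x) : ℝ) : ℂ) := by
      intro x
      have hfIk : ∀ k : ℕ, fI g B₀ k (fun _ : Fin k => y) x =
          g x * ((Real.exp (-(1/2) * qf B₀ x) * ((-(1/2) * qf y x) ^ k / k !) : ℝ) : ℂ) := by
        intro k
        rw [fI, Finset.prod_const, Finset.card_univ, Fintype.card_fin]
        exact congrArg _ (congrArg _ (by ring))
      have hu : Summable (fun k : ℕ =>
          Real.exp (-(1/2) * qf B₀ x) * ((-(1/2) * qf y x) ^ k / k !)) :=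
        (Real.summable_pow_div_factorial _).mul_left _
      calc (∑' k, fI g B₀ k (fun _ : Fin k => y) x)
          = ∑' k : ℕ, g x *
              ((Real.exp (-(1/2) * qf B₀ x) * ((-(1/2) * qf y x) ^ k / k !) : ℝ) : ℂ) :=
            tsum_congr hfIk
        _ = g x * ∑' k : ℕ,
              ((Real.exp (-(1/2) * qf B₀ x) * ((-(1/2) * qf y x) ^ k / k !) : ℝ) : ℂ) :=
            tsum_mul_left
        _ = g x * ((∑' k : ℕ,
              Real.exp (-(1/2) * qf B₀ x) * ((-(1/2) * qf y x) ^ k / k !) : ℝ) : ℂ) := by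
            rw [Complex.ofReal_tsum]
        _ = g x * ((Real.exp (-(1/2) * qf B₀ x) *
              ∑' k : ℕ, ((-(1/2) * qf y x) ^ k / k !) : ℝ) : ℂ) := by
            rw [tsum_mul_left]
        _ = g x * ((Real.exp (-(1/2) * qf (B₀ + y) x) : ℝ) : ℂ) := by
            rw [← real_exp_eq_tsum, ← Real.exp_add, qf_add]
            have harg : -(1/2) * (qf B₀ x + qf y x) =
                -(1/2) * qf B₀ x + -(1/2) * qf y x := by ring
            rw [harg]
    rw [show (∫ x, ∑' k, fI g B₀ k (fun _ : Fin k => y) x) =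
        ∫ x, g x * ((Real.exp (-(1/2) * qf (B₀ + y) x) : ℝ) : ℂ) from
      integral_congr_ae (Filter.Eventually.of_forall hptw)] at hkey
    exact hkey
  exact hfp.analyticAt

end WithG

/-- entry evaluation as a continuous linear map -/
noncomputable def entryCLM (i j : Fin n) : Matrix (Fin n) (Fin n) ℝ →L[ℝ] ℝ :=
  LinearMap.toContinuousLinearMap
    { toFun := fun M => M i j
      map_add' := fun _ _ => rfl
      map_smul' := fun _ _ => rfl }

lemma contDiff_entry (i j : Fin n) :
    ContDiff ℝ (⊤ : ℕ∞) (fun M : Matrix (Fin n) (Fin n) ℝ => M i j) :=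
  (entryCLM i j).contDiff

lemma contDiff_det :
    ContDiff ℝ (⊤ : ℕ∞) (fun M : Matrix (Fin n) (Fin n) ℝ => M.det) := by
  classical
  have h : (fun M : Matrix (Fin n) (Fin n) ℝ => M.det) =
      fun M => ∑ σ : Equiv.Perm (Fin n),
        ((Equiv.Perm.sign σ : ℤ) : ℝ) * ∏ i, M (σ i) i := by
    funext M
    rw [Matrix.det_apply]
    apply Finset.sum_congr rfl
    intro σ _
    rw [Units.smul_def, zsmul_eq_mul]
  rw [h]
  apply ContDiff.sum
  intro σ _
  exact contDiff_const.mul (contDiff_prod fun i _ => contDiff_entry (σ i) i)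

/-- `OmegaParam` as a linear map. -/
noncomputable def OmegaCLM : (SymIdx n → ℝ) →L[ℝ] Matrix (Fin n) (Fin n) ℝ :=
  LinearMap.toContinuousLinearMap
    { toFun := OmegaParam
      map_add' := by
        intro a b
        funext i j
        by_cases h : i ≤ j <;> simp [OmegaParam, h, Matrix.add_apply]
      map_smul' := by
        intro t a
        funext i j
        by_cases h : i ≤ j <;> simp [OmegaParam, h, Matrix.smul_apply] }

lemma contDiff_Omega : ContDiff ℝ (⊤ : ℕ∞) (OmegaParam (n := n)) :=
  (OmegaCLM (n := n)).contDiff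

lemma omega_symm (A : SymIdx n → ℝ) (i j : Fin n) :
    OmegaParam A j i = OmegaParam A i j := by
  unfold OmegaParam
  rcases le_or_gt i j with h | h
  · by_cases h' : j ≤ i
    · have hij : i = j := le_antisymm h h'
      subst hij; simp
    · rw [dif_neg h', dif_pos h]
  · have h' : ¬ i ≤ j := not_le.mpr h
    rw [dif_pos h.le, dif_neg h']

lemma omega_isHermitian (A : SymIdx n → ℝ) : (OmegaParam A).IsHermitian := by
  ext i j
  rw [Matrix.conjTranspose_apply, star_trivial]
  exact omega_symm A i j

lemma posdef_of_coercive {B : Matrix (Fin n) (Fin n) ℝ} {c : ℝ} (hc : 0 < c)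
    (hherm : B.IsHermitian) (h : ∀ x, c * ‖x‖ ^ 2 ≤ qf B x) : B.PosDef := by
  refine Matrix.PosDef.of_dotProduct_mulVec_pos hherm fun x hx => ?_
  have hxn : 0 < ‖x‖ := norm_pos_iff.mpr hx
  have h1 : (0:ℝ) < c * ‖x‖ ^ 2 := by positivity
  have h2 := h x
  simpa [qf, dotProduct] using lt_of_lt_of_le h1 h2

lemma isOpen_posdef_param : IsOpen {A : SymIdx n → ℝ | (OmegaParam A).PosDef} := by
  rw [Metric.isOpen_iff]
  intro A₀ hA₀
  obtain ⟨c, hc, hco⟩ := exists_coercive hA₀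
  set K := (OmegaCLM (n := n)).opNorm + 1 with hK
  have hK0 : 0 < K := by rw [hK]; exact add_pos_of_nonneg_of_pos (ContinuousLinearMap.opNorm_nonneg _) one_pos
  refine ⟨(c/(2*((n:ℝ)+1)))/K, by positivity, ?_⟩
  intro A hA
  rw [Metric.mem_ball, dist_eq_norm] at hA
  have hd : ‖OmegaParam A - OmegaParam A₀‖ ≤ c/(2*((n:ℝ)+1)) := by
    have h1 : OmegaParam A - OmegaParam A₀ = OmegaCLM (n := n) (A - A₀) := by
      rw [map_sub]; rfl
    rw [h1]
    calc ‖OmegaCLM (n := n) (A - A₀)‖ ≤ (OmegaCLM (n := n)).opNorm * ‖A - A₀‖ :=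
          (OmegaCLM (n := n)).le_opNorm _
      _ ≤ K * ‖A - A₀‖ := by
          apply mul_le_mul_of_nonneg_right _ (norm_nonneg _)
          rw [hK]; linarith
      _ ≤ K * ((c/(2*((n:ℝ)+1)))/K) := by
          exact mul_le_mul_of_nonneg_left hA.le hK0.le
      _ = c/(2*((n:ℝ)+1)) := by field_simp
  have hq := coercive_of_close hco hd
  exact posdef_of_coercive (by positivity) (omega_isHermitian A) hq

section Final

variable (g : (Fin n → ℝ) → ℂ) (hg : Measurable g) (N : ℕ)
variable (hN : Integrable (fun x : Fin n → ℝ => ((1 + ‖x‖) ^ N)⁻¹ • g x))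

lemma integral_phi_eq (phi : Matrix (Fin n) (Fin n) ℝ → (Fin n → ℝ) → ℝ)
    (hphi : ∀ S x, phi S x = ((2 * π) ^ n * S.det) ^ (-(1 / 2 : ℝ)) *
      Real.exp (-(1 / 2) * ∑ i, x i * (S⁻¹).mulVec x i)) (A : SymIdx n → ℝ) :
    ∫ x : Fin n → ℝ, g x * (phi (OmegaParam A) x : ℂ) =
      ((((2 * π) ^ n * (OmegaParam A).det) ^ (-(1 / 2 : ℝ)) : ℝ) : ℂ) *
        ∫ x : Fin n → ℝ, g x *
          ((Real.exp (-(1/2) * qf ((OmegaParam A)⁻¹) x) : ℝ) : ℂ) := by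
  rw [← MeasureTheory.integral_const_mul]
  apply integral_congr_ae
  apply Filter.Eventually.of_forall
  intro x
  dsimp only
  rw [hphi]
  simp only [qf]
  rw [Complex.ofReal_mul]
  ring

include hg hN in
theorem main_inside (phi : Matrix (Fin n) (Fin n) ℝ → (Fin n → ℝ) → ℝ)
    (hphi : ∀ S x, phi S x = ((2 * π) ^ n * S.det) ^ (-(1 / 2 : ℝ)) *
      Real.exp (-(1 / 2) * ∑ i, x i * (S⁻¹).mulVec x i)) :
    ContDiffOn ℝ (⊤ : ℕ∞)
      (fun A : SymIdx n → ℝ => ∫ x : Fin n → ℝ, g x * (phi (OmegaParam A) x : ℂ))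
      {A : SymIdx n → ℝ | (OmegaParam A).PosDef} := by
  classical
  intro A₀ hA₀
  have hA₀' : (OmegaParam A₀).PosDef := hA₀
  apply ContDiffAt.contDiffWithinAt
  -- the prefactor
  have hdet : ContDiffAt ℝ (⊤ : ℕ∞) (fun A : SymIdx n → ℝ => (2*π)^n * (OmegaParam A).det) A₀ :=
    (contDiff_const.mul (contDiff_det.comp contDiff_Omega)).contDiffAt
  have hpos : (0:ℝ) < (2*π)^n * (OmegaParam A₀).det :=
    mul_pos (pow_pos (by linarith [Real.pi_pos]) n) hA₀'.det_pos
  have hrpow : ContDiffAt ℝ (⊤ : ℕ∞) (fun t : ℝ => t ^ (-(1/2 : ℝ)))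
      ((2*π)^n * (OmegaParam A₀).det) :=
    Real.contDiffAt_rpow_const_of_ne hpos.ne'
  have h1 : ContDiffAt ℝ (⊤ : ℕ∞)
      (fun A : SymIdx n → ℝ => ((2*π)^n * (OmegaParam A).det) ^ (-(1/2:ℝ))) A₀ :=
    by have := hrpow.comp A₀ hdet; exact this
  have h2 : ContDiffAt ℝ (⊤ : ℕ∞)
      (fun A : SymIdx n → ℝ =>
        ((((2*π)^n * (OmegaParam A).det) ^ (-(1/2:ℝ)) : ℝ) : ℂ)) A₀ :=
    Complex.ofRealCLM.contDiff.contDiffAt.comp A₀ h1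
  -- the integral factor
  have hinvpd : ((OmegaParam A₀)⁻¹).PosDef := hA₀'.inv
  obtain ⟨c, hc, hco⟩ := exists_coercive hinvpd
  have hH : ContDiffAt ℝ (⊤ : ℕ∞)
      (fun B : Matrix (Fin n) (Fin n) ℝ =>
        ∫ x : Fin n → ℝ, g x * ((Real.exp (-(1/2) * qf B x) : ℝ) : ℂ))
      ((OmegaParam A₀)⁻¹) :=
    (analyticAt_H g hg N hN hc hco).contDiffAt
  have hUnit : IsUnit (OmegaParam A₀) :=
    (Matrix.isUnit_iff_isUnit_det _).mpr hA₀'.det_pos.ne'.isUnit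
  have hinv : ContDiffAt ℝ (⊤ : ℕ∞) (fun A : SymIdx n → ℝ => (OmegaParam A)⁻¹) A₀ := by
    have h3 : (fun A : SymIdx n → ℝ => (OmegaParam A)⁻¹) =
        (fun M : Matrix (Fin n) (Fin n) ℝ => Ring.inverse M) ∘ OmegaParam :=
      funext fun A => Matrix.nonsing_inv_eq_ringInverse _
    rw [h3]
    have h4 : ContDiffAt ℝ (⊤ : ℕ∞) (Ring.inverse (M₀ := Matrix (Fin n) (Fin n) ℝ))
        (OmegaParam A₀) := by
      have h5 := contDiffAt_ringInverse ℝ (R := Matrix (Fin n) (Fin n) ℝ)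
        (n := (⊤ : ℕ∞)) hUnit.unit
      rwa [IsUnit.unit_spec] at h5
    exact h4.comp A₀ contDiff_Omega.contDiffAt
  have h6 : ContDiffAt ℝ (⊤ : ℕ∞)
      (fun A : SymIdx n → ℝ =>
        ∫ x : Fin n → ℝ, g x *
          ((Real.exp (-(1/2) * qf ((OmegaParam A)⁻¹) x) : ℝ) : ℂ)) A₀ :=
    by have := hH.comp A₀ hinv; exact this
  have h7 := h2.mul h6
  apply h7.congr_of_eventuallyEq
  exact Filter.Eventually.of_forall (integral_phi_eq g phi hphi)

end Final

end GaussSmoothAux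

/-- Let `g : ℝⁿ → ℂ` be measurable of moderate growth
(`x ↦ (1+|x|)^{−N}·g(x)` integrable for some `N`). Then the map
`A ↦ ∫ g·φ_{Ω(A)} = 𝔼[g(X_{Ω(A)})]` is smooth on `U = Ω⁻¹(Sym_n⁺)`, where
`φ_Σ(x) = ((2π)ⁿ·det Σ)^{−1/2}·exp(−½⟨x, Σ⁻¹x⟩)` is the density of `N(0,Σ)`. -/
theorem expectation_gaussian_smooth_in_covariance (n : ℕ)
    (g : (Fin n → ℝ) → ℂ) (hg : Measurable g)
    (hmod : ∃ N : ℕ, Integrable (fun x : Fin n → ℝ => ((1 + ‖x‖) ^ N)⁻¹ • g x))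
    (φ : Matrix (Fin n) (Fin n) ℝ → (Fin n → ℝ) → ℝ)
    (hφ : ∀ S x, φ S x = ((2 * π) ^ n * S.det) ^ (-(1 / 2 : ℝ)) *
      Real.exp (-(1 / 2) * ∑ i, x i * (S⁻¹).mulVec x i)) :
    ContDiffOn ℝ (⊤ : ℕ∞)
      (fun A : SymIdx n → ℝ => ∫ x : Fin n → ℝ, g x * (φ (OmegaParam A) x : ℂ))
      {A : SymIdx n → ℝ | (OmegaParam A).PosDef} := by
  obtain ⟨N, hN⟩ := hmod
  exact GaussSmoothAux.main_inside g hg N hN φ hφ
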